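/- arXiv:2109.14522 — 2 statements merged into one kernel-verified Lean document; each statement's English description precedes it below -/
import Mathlib

section
/- Let x ∈ ℂ^{n×r} have full rank r. Then the kernel of the real-linear map w ↦ x w* + w x* from ℂ^{n×r} to Hermitian n×n matrices is exactly the set {x K : K ∈ ℂ^{r×r}, K* = −K} of products of x with skew-Hermitian r×r matrices (the vertical space of the submersion π(x) = x x* at x). -/
open Matrix Filter
open scoped ComplexOrder

noncomputable def frob {p q : ℕ} (x : Matrix (Fin p) (Fin q) ℂ) : ℝ :=
  Real.sqrt (Matrix.trace (xᴴ * x)).re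

noncomputable def rinner {p q : ℕ} (X Y : Matrix (Fin p) (Fin q) ℂ) : ℝ :=
  (Matrix.trace (Xᴴ * Y)).re

noncomputable def nuclear {p q : ℕ} (x : Matrix (Fin p) (Fin q) ℂ) : ℝ :=
  (Matrix.trace ((Matrix.posSemidef_conjTranspose_mul_self x).1.eigenvectorUnitary.1 *
    diagonal (((↑) : ℝ → ℂ) ∘ Real.sqrt ∘ (Matrix.posSemidef_conjTranspose_mul_self x).1.eigenvalues) *
    (star (Matrix.posSemidef_conjTranspose_mul_self x).1.eigenvectorUnitary : Matrix (Fin q) (Fin q) ℂ))).re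

noncomputable def theta {n r : ℕ} (x : Matrix (Fin n) (Fin r) ℂ) : Matrix (Fin n) (Fin n) ℂ :=
  (Matrix.posSemidef_self_mul_conjTranspose x).1.eigenvectorUnitary.1 *
    diagonal (((↑) : ℝ → ℂ) ∘ Real.sqrt ∘ (Matrix.posSemidef_self_mul_conjTranspose x).1.eigenvalues) *
    (star (Matrix.posSemidef_self_mul_conjTranspose x).1.eigenvectorUnitary : Matrix (Fin n) (Fin n) ℂ)

noncomputable def psi {n r : ℕ} (x : Matrix (Fin n) (Fin r) ℂ) : Matrix (Fin n) (Fin n) ℂ :=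
  frob x • theta x

noncomputable def Dmet {n r : ℕ} (x y : Matrix (Fin n) (Fin r) ℂ) : ℝ :=
  ⨅ U : Matrix.unitaryGroup (Fin r) ℂ, frob (x - y * (U : Matrix (Fin r) (Fin r) ℂ))

noncomputable def dmet {n r : ℕ} (x y : Matrix (Fin n) (Fin r) ℂ) : ℝ :=
  ⨅ U : Matrix.unitaryGroup (Fin r) ℂ,
    frob (x - y * (U : Matrix (Fin r) (Fin r) ℂ)) * frob (x + y * (U : Matrix (Fin r) (Fin r) ℂ))

/-!
A full-rank `x` has a left inverse `L`. Applying `L` to `x wᴴ + w xᴴ = 0` gives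
`wᴴ = -(L w) xᴴ`, so `w = x K` with `K = -(L w)ᴴ`. Substituting back, `x (Kᴴ + K) xᴴ = 0`, and
sandwiching between `L` and `Lᴴ` yields `Kᴴ + K = 0`.
-/

namespace Matrix

theorem exists_mul_eq_one_of_rank_eq_card_width {m n K : Type*} [Fintype m] [Fintype n]
    [DecidableEq n] [Field K] {A : Matrix m n K} (hA : A.rank = Fintype.card n) :
    ∃ B : Matrix n m K, B * A = 1 := by
  rw [← vecMul_surjective_iff_exists_left_inverse]
  have hrange : LinearMap.range Aᵀ.mulVecLin = ⊤ := by
    apply Submodule.eq_top_of_finrank_eq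
    rw [← rank, rank_transpose, hA, Module.finrank_fintype_fun_eq_card]
  intro y
  obtain ⟨v, hv⟩ := LinearMap.range_eq_top.mp hrange y
  exact ⟨v, by simpa only [mulVecLin_apply, mulVec_transpose] using hv⟩

section LeftInverse

variable {m n α : Type*} [Fintype m] [Fintype n] [DecidableEq n] [Ring α] [StarRing α]
  {L : Matrix n m α} {x : Matrix m n α}

theorem eq_zero_of_mul_mul_conjTranspose_eq_zero (hL : L * x = 1) {M : Matrix n n α}
    (hM : x * M * xᴴ = 0) : M = 0 :=
  calc M = (L * x) * M * (L * x)ᴴ := by simp [hL]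
    _ = L * (x * M * xᴴ) * Lᴴ := by simp only [conjTranspose_mul, Matrix.mul_assoc]
    _ = 0 := by simp [hM]

theorem mul_conjTranspose_add_eq_zero_iff (hL : L * x = 1) (w : Matrix m n α) :
    x * wᴴ + w * xᴴ = 0 ↔ ∃ K : Matrix n n α, Kᴴ = -K ∧ w = x * K := by
  have h_expand (K : Matrix n n α) : x * (x * K)ᴴ + x * K * xᴴ = x * (Kᴴ + K) * xᴴ := by
    simp only [conjTranspose_mul, Matrix.mul_add, Matrix.add_mul, Matrix.mul_assoc]
  constructor
  · intro hw
    have hw_eq : w = x * -(L * w)ᴴ := by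
      have hLw : wᴴ + L * w * xᴴ = 0 := by
        simpa only [Matrix.mul_add, ← Matrix.mul_assoc, hL, Matrix.one_mul, Matrix.mul_zero] using
          congrArg (L * ·) hw
      calc w = wᴴᴴ := (conjTranspose_conjTranspose w).symm
        _ = (-(L * w * xᴴ))ᴴ := by rw [eq_neg_of_add_eq_zero_left hLw]
        _ = x * -(L * w)ᴴ := by
          simp only [conjTranspose_neg, conjTranspose_mul, conjTranspose_conjTranspose,
            Matrix.mul_neg]
    refine ⟨_, eq_neg_of_add_eq_zero_left ?_, hw_eq⟩
    rw [hw_eq, h_expand] at hw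
    exact eq_zero_of_mul_mul_conjTranspose_eq_zero hL hw
  · rintro ⟨K, hK, rfl⟩
    rw [h_expand, hK, neg_add_cancel, Matrix.mul_zero, Matrix.zero_mul]

end LeftInverse

end Matrix

/-- for full-rank `x ∈ ℂ^{n×r}`, the kernel of `w ↦ x w* + w x*` is exactly
the vertical space `{x K : Kskew-Hermitian}`. -/
theorem vertical_space_char (n r : ℕ) (x : Matrix (Fin n) (Fin r) ℂ) (hx : x.rank = r) :
    ∀ w : Matrix (Fin n) (Fin r) ℂ,
      x * wᴴ + w * xᴴ = 0 ↔
      ∃ K : Matrix (Fin r) (Fin r) ℂ, Kᴴ = -K ∧ w = x * K := by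
  obtain ⟨L, hL⟩ := exists_mul_eq_one_of_rank_eq_card_width (A := x)
    (by rw [hx, Fintype.card_fin])
  exact mul_conjTranspose_add_eq_zero_iff hL
end

section
/- Let x ∈ ℂ^{n×r} have full rank r, let P denote the orthogonal projection onto Ran(x) and P⊥ = I − P. Then the orthogonal complement in (ℂ^{n×r}, ⟨·,·⟩_ℝ) of the vertical space {x K : K skew-Hermitian} equals the horizontal space H_x = {H x + X : H ∈ ℂ^{n×n} Hermitian with P H = H, X ∈ ℂ^{n×r} with P X = 0}, and the image of H_x under the differential w ↦ x w* + w x* equals the tangent space {W ∈ ℂ^{n×n} : W* = W and P⊥ W P⊥ = 0}. -/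
open Matrix Filter
open scoped ComplexOrder

/-!
Write `s = xᴴ x`, which is positive definite since `x` has full column rank; then
`P = x s⁻¹ xᴴ`. As `Re tr((x K)ᴴ w) = Re tr(Kᴴ (xᴴ w))` and the skew-Hermitian matrices are the
real-orthogonal complement of the Hermitian ones, `w` is orthogonal to the vertical space iff
`xᴴ w` is Hermitian, and such `w` splits as `H x + X` with `H = x s⁻¹ (xᴴ w) s⁻¹ xᴴ`,
`X = (1 - P) w`. For the tangent space, `(1 - P) x = 0` kills the block `(1 - P) W (1 - P)`;
conversely `w = x D s + (1 - P) W x s⁻¹` has `xᴴ w = s D s` and produces the off-diagonal blocks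
of `W`, and the block `P W P` once `D` solves the Lyapunov equation `s D + D s = s⁻¹ xᴴ W x s⁻¹`.
In an eigenbasis of `s` that equation is solved entrywise by dividing by `λᵢ + λⱼ > 0`.
-/

namespace Matrix

theorem mulVec_injective_of_rank_eq_card {K m n : Type*} [Field K] [Fintype n] (x : Matrix m n K)
    (hx : x.rank = Fintype.card n) : Function.Injective x.mulVec := by
  have h := x.mulVecLin.finrank_range_add_finrank_ker
  rw [← rank, hx, Module.finrank_fintype_fun_eq_card, add_eq_left,
    Submodule.finrank_eq_zero, LinearMap.ker_eq_bot] at h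
  exact h

variable {𝕜 : Type*} [RCLike 𝕜] {m n : Type*} [Fintype n]

theorem isHermitian_mul_conjTranspose_add (x w : Matrix m n 𝕜) :
    (x * wᴴ + w * xᴴ).IsHermitian := by
  simp only [IsHermitian, conjTranspose_add, conjTranspose_mul, conjTranspose_conjTranspose,
    add_comm]

variable [Fintype m]

theorem re_trace_conjTranspose_mul_comm (A B : Matrix m n 𝕜) :
    RCLike.re (Aᴴ * B).trace = RCLike.re (Bᴴ * A).trace := by
  rw [← RCLike.conj_re, ← RCLike.star_def, ← trace_conjTranspose, conjTranspose_mul,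
    conjTranspose_conjTranspose]

theorem re_trace_conjTranspose_mul_eq_neg {K : Matrix n n 𝕜} (hK : Kᴴ = -K) (A : Matrix n n 𝕜) :
    RCLike.re (Kᴴ * Aᴴ).trace = -RCLike.re (Kᴴ * A).trace := by
  rw [re_trace_conjTranspose_mul_comm, conjTranspose_conjTranspose, trace_mul_comm, hK,
    neg_mul, trace_neg, map_neg, neg_neg]

theorem isHermitian_iff_forall_re_trace_conjTranspose_mul_eq_zero (A : Matrix n n 𝕜) :
    A.IsHermitian ↔ ∀ K : Matrix n n 𝕜, Kᴴ = -K → RCLike.re (Kᴴ * A).trace = 0 := by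
  refine ⟨fun hA K hK => ?_, fun h => ?_⟩
  · have := re_trace_conjTranspose_mul_eq_neg hK A
    rw [hA.eq] at this
    linarith
  set K := A - Aᴴ
  have hK : Kᴴ = -K := by simp [K]
  have hre : RCLike.re (Kᴴ * K).trace = 0 := by
    rw [mul_sub, trace_sub, map_sub, re_trace_conjTranspose_mul_eq_neg hK, h K hK]
    ring
  have hpsd := (posSemidef_conjTranspose_mul_self K).trace_nonneg
  have htr : (Kᴴ * K).trace = 0 :=
    RCLike.ext (by simpa using hre) (by simpa using (RCLike.nonneg_iff.mp hpsd).2)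
  exact (sub_eq_zero.mp (trace_conjTranspose_mul_self_eq_zero_iff.mp htr)).symm

theorem exists_isHermitian_diagonal_mul_add_mul_diagonal_eq [DecidableEq n] {d : n → ℝ}
    (hd : ∀ i j, d i + d j ≠ 0) {N : Matrix n n 𝕜} (hN : N.IsHermitian) :
    ∃ E : Matrix n n 𝕜, E.IsHermitian ∧
      diagonal (RCLike.ofReal ∘ d) * E + E * diagonal (RCLike.ofReal ∘ d) = N := by
  have hd' : ∀ i j, (d i + d j : 𝕜) ≠ 0 := fun i j => by exact_mod_cast hd i j
  refine ⟨of fun i j => N i j / (d i + d j), ?_, ?_⟩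
  · ext i j
    simp [← hN.apply i j, add_comm]
  · ext i j
    simp only [add_apply, diagonal_mul, mul_diagonal, of_apply, Function.comp_apply]
    field_simp [hd' i j]

theorem PosDef.exists_isHermitian_mul_add_mul_eq [DecidableEq n] {s : Matrix n n 𝕜}
    (hs : s.PosDef) {C : Matrix n n 𝕜} (hC : C.IsHermitian) :
    ∃ D : Matrix n n 𝕜, D.IsHermitian ∧ s * D + D * s = C := by
  have hspec := hs.1.spectral_theorem
  rw [Unitary.conjStarAlgAut_apply, star_eq_conjTranspose] at hspec
  set U : Matrix n n 𝕜 := (hs.1.eigenvectorUnitary : Matrix n n 𝕜)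
  set Λ := diagonal (RCLike.ofReal ∘ hs.1.eigenvalues : n → 𝕜)
  have hUUh : U * Uᴴ = 1 := Unitary.mul_star_self_of_mem hs.1.eigenvectorUnitary.2
  have hUhU_left (Y : Matrix n n 𝕜) : Uᴴ * (U * Y) = Y := by
    rw [← Matrix.mul_assoc, ← star_eq_conjTranspose,
      Unitary.star_mul_self_of_mem hs.1.eigenvectorUnitary.2, Matrix.one_mul]
  obtain ⟨E, hE, hEN⟩ := exists_isHermitian_diagonal_mul_add_mul_diagonal_eq
    (fun i j => (add_pos (hs.eigenvalues_pos i) (hs.eigenvalues_pos j)).ne')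
    (isHermitian_conjTranspose_mul_mul U hC)
  refine ⟨U * E * Uᴴ, isHermitian_mul_mul_conjTranspose U hE, ?_⟩
  calc s * (U * E * Uᴴ) + U * E * Uᴴ * s
      = U * (Λ * E + E * Λ) * Uᴴ := by
        rw [hspec]
        simp only [Matrix.mul_add, Matrix.add_mul, Matrix.mul_assoc, hUhU_left]
    _ = C := by
        rw [hEN, ← Matrix.mul_assoc, ← Matrix.mul_assoc, hUUh, Matrix.one_mul, Matrix.mul_assoc,
          hUUh, Matrix.mul_one]

/-- The orthogonal projection onto the column space of `x` when `xᴴ * x` is invertible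
(otherwise the junk inverse makes it `0`). -/
noncomputable def rangeProj [DecidableEq n] (x : Matrix m n 𝕜) : Matrix m m 𝕜 :=
  x * (xᴴ * x)⁻¹ * xᴴ

section rangeProj

variable [DecidableEq n] {x : Matrix m n 𝕜}

theorem isHermitian_rangeProj (x : Matrix m n 𝕜) : (rangeProj x).IsHermitian :=
  isHermitian_mul_mul_conjTranspose x (isHermitian_conjTranspose_mul_self x).inv

theorem rangeProj_mul_self (hx : IsUnit (xᴴ * x)) : rangeProj x * x = x := by
  rw [rangeProj, Matrix.mul_assoc,
    nonsing_inv_mul_cancel_right _ _ ((isUnit_iff_isUnit_det _).mp hx)]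

theorem conjTranspose_mul_rangeProj (hx : IsUnit (xᴴ * x)) : xᴴ * rangeProj x = xᴴ := by
  rw [← (isHermitian_rangeProj x).eq, ← conjTranspose_mul, rangeProj_mul_self hx]

theorem rangeProj_mul_rangeProj (hx : IsUnit (xᴴ * x)) :
    rangeProj x * rangeProj x = rangeProj x := by
  nth_rewrite 2 [rangeProj]
  rw [← Matrix.mul_assoc, ← Matrix.mul_assoc, rangeProj_mul_self hx, rangeProj]

theorem eq_rangeProj {P : Matrix m m 𝕜} (hx : IsUnit (xᴴ * x)) (hPH : Pᴴ = P) (hPP : P * P = P)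
    (hPran : ∀ u : m → 𝕜, P *ᵥ u = u ↔ ∃ c : n → 𝕜, u = x *ᵥ c) :
    P = rangeProj x := by
  have hPx : P * x = x := ext_iff_mulVec.mpr fun v => by
    rw [← mulVec_mulVec, (hPran _).mpr ⟨v, rfl⟩]
  have hQP : rangeProj x * P = P := ext_iff_mulVec.mpr fun v => by
    obtain ⟨c, hc⟩ := (hPran (P *ᵥ v)).mp (by rw [mulVec_mulVec, hPP])
    rw [← mulVec_mulVec, hc, mulVec_mulVec, rangeProj_mul_self hx]
  calc P = (rangeProj x * P)ᴴ := by rw [hQP, hPH]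
    _ = P * x * (xᴴ * x)⁻¹ * xᴴ := by
      rw [conjTranspose_mul, hPH, (isHermitian_rangeProj x).eq, rangeProj]
      simp only [Matrix.mul_assoc]
    _ = rangeProj x := by rw [hPx, rangeProj]

theorem isHermitian_conjTranspose_mul_iff (hx : IsUnit (xᴴ * x)) (w : Matrix m n 𝕜) :
    (xᴴ * w).IsHermitian ↔ ∃ (H : Matrix m m 𝕜) (X : Matrix m n 𝕜),
      H.IsHermitian ∧ rangeProj x * H = H ∧ rangeProj x * X = 0 ∧ w = H * x + X := by
  constructor
  · intro hA
    have hg := (isHermitian_conjTranspose_mul_self x).inv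
    set y := x * (xᴴ * x)⁻¹
    have hHx : y * (xᴴ * w) * yᴴ * x = rangeProj x * w := by
      simp only [y, rangeProj, conjTranspose_mul, hg.eq, Matrix.mul_assoc,
        nonsing_inv_mul _ ((isUnit_iff_isUnit_det _).mp hx), Matrix.mul_one]
    refine ⟨y * (xᴴ * w) * yᴴ, w - rangeProj x * w, isHermitian_mul_mul_conjTranspose y hA,
      ?_, ?_, by rw [hHx]; abel⟩
    · simp only [y, ← Matrix.mul_assoc, rangeProj_mul_self hx]
    · rw [Matrix.mul_sub, ← Matrix.mul_assoc, rangeProj_mul_rangeProj hx, sub_self]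
  · rintro ⟨H, X, hH, -, hX, rfl⟩
    have hxX : xᴴ * X = 0 := by
      rw [← conjTranspose_mul_rangeProj hx, Matrix.mul_assoc, hX, Matrix.mul_zero]
    rw [Matrix.mul_add, hxX, add_zero, ← Matrix.mul_assoc]
    exact isHermitian_conjTranspose_mul_mul x hH

end rangeProj

section tangent

variable [DecidableEq m] [DecidableEq n] {x : Matrix m n 𝕜}

theorem one_sub_rangeProj_mul_self (hx : IsUnit (xᴴ * x)) : (1 - rangeProj x) * x = 0 := by
  rw [Matrix.sub_mul, Matrix.one_mul, rangeProj_mul_self hx, sub_self]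

theorem one_sub_rangeProj_mul_mul_one_sub_rangeProj_eq_zero (hx : IsUnit (xᴴ * x))
    (w : Matrix m n 𝕜) :
    (1 - rangeProj x) * (x * wᴴ + w * xᴴ) * (1 - rangeProj x) = 0 := by
  have hxR : xᴴ * (1 - rangeProj x) = 0 := by
    rw [← (isHermitian_rangeProj x).eq, ← conjTranspose_one, ← conjTranspose_sub,
      ← conjTranspose_mul, one_sub_rangeProj_mul_self hx, conjTranspose_zero]
  calc (1 - rangeProj x) * (x * wᴴ + w * xᴴ) * (1 - rangeProj x)
      = (1 - rangeProj x) * x * (wᴴ * (1 - rangeProj x)) +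
          (1 - rangeProj x) * w * (xᴴ * (1 - rangeProj x)) := by
        simp only [Matrix.mul_add, Matrix.add_mul, Matrix.mul_assoc]
    _ = 0 := by rw [one_sub_rangeProj_mul_self hx, hxR, Matrix.zero_mul, Matrix.mul_zero, add_zero]

theorem exists_isHermitian_conjTranspose_mul_and_eq (hx : (xᴴ * x).PosDef) {W : Matrix m m 𝕜}
    (hW : W.IsHermitian) (hW0 : (1 - rangeProj x) * W * (1 - rangeProj x) = 0) :
    ∃ w : Matrix m n 𝕜, (xᴴ * w).IsHermitian ∧ x * wᴴ + w * xᴴ = W := by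
  set s := xᴴ * x
  set y := x * s⁻¹
  set Q := rangeProj x
  set R := 1 - Q with hR
  have hQ : x * yᴴ = Q := by
    simp only [y, Q, rangeProj, conjTranspose_mul, hx.1.inv.eq, Matrix.mul_assoc]
    rfl
  have hQ' : y * xᴴ = Q := rfl
  have hRH : Rᴴ = R := by
    rw [hR, conjTranspose_sub, conjTranspose_one, (isHermitian_rangeProj x).eq]
  have hxR : xᴴ * R = 0 := by
    rw [← hRH, ← conjTranspose_mul, one_sub_rangeProj_mul_self hx.isUnit, conjTranspose_zero]
  obtain ⟨D, hD, hsD⟩ :=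
    hx.exists_isHermitian_mul_add_mul_eq (isHermitian_conjTranspose_mul_mul y hW)
  refine ⟨x * D * s + R * W * y, ?_, ?_⟩
  · simp only [Matrix.mul_add, ← Matrix.mul_assoc, hxR, Matrix.zero_mul, add_zero]
    have := isHermitian_conjTranspose_mul_mul s hD
    rwa [hx.1.eq] at this
  calc x * (x * D * s + R * W * y)ᴴ + (x * D * s + R * W * y) * xᴴ
      = x * (s * D + D * s) * xᴴ + x * yᴴ * W * R + R * W * (y * xᴴ) := by
        simp only [conjTranspose_add, conjTranspose_mul, hx.1.eq, hD.eq, hW.eq, hRH,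
          Matrix.mul_add, Matrix.add_mul, Matrix.mul_assoc]
        abel
    _ = Q * W * Q + Q * W * R + R * W * Q := by
        rw [hsD]; simp only [Matrix.mul_assoc, hQ', ← hQ]
    _ = W - R * W * R := by rw [hR]; noncomm_ring
    _ = W := by rw [hW0, sub_zero]

end tangent

end Matrix

/-- for full-rank `x ∈ ℂ^{n×r}` and `P` the orthogonal projection onto
`Ran(x)`, the orthogonal complement (w.r.t. `⟨z,w⟩_ℝ = Re tr(z* w)`) of the vertical space
`{x K : K* = −K}` is the horizontal space
`H_x = {H x + X : H Hermitian, P H = H, P X = 0}`, and the image of `H_x` under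
`w ↦ x w* + w x*` is the tangent space `{W : W* = W, (1−P) W (1−P) = 0}`. -/
theorem horizontal_space_and_tangent_space (n r : ℕ)
    (x : Matrix (Fin n) (Fin r) ℂ) (hx : x.rank = r)
    (P : Matrix (Fin n) (Fin n) ℂ) (hP1 : Pᴴ = P) (hP2 : P * P = P)
    (hPran : ∀ u : Fin n → ℂ, P *ᵥ u = u ↔ ∃ c : Fin r → ℂ, u = x *ᵥ c) :
    (∀ w : Matrix (Fin n) (Fin r) ℂ,
      (∀ K : Matrix (Fin r) (Fin r) ℂ, Kᴴ = -K →
        (Matrix.trace ((x * K)ᴴ * w)).re = 0) ↔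
      ∃ (H : Matrix (Fin n) (Fin n) ℂ) (X : Matrix (Fin n) (Fin r) ℂ),
        Hᴴ = H ∧ P * H = H ∧ P * X = 0 ∧ w = H * x + X) ∧
    (∀ W : Matrix (Fin n) (Fin n) ℂ,
      (∃ (H : Matrix (Fin n) (Fin n) ℂ) (X : Matrix (Fin n) (Fin r) ℂ),
        Hᴴ = H ∧ P * H = H ∧ P * X = 0 ∧
        W = x * (H * x + X)ᴴ + (H * x + X) * xᴴ) ↔
      (Wᴴ = W ∧ (1 - P) * W * (1 - P) = 0)) := by
  have hpos : (xᴴ * x).PosDef :=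
    .conjTranspose_mul_self x (mulVec_injective_of_rank_eq_card x (by rw [hx, Fintype.card_fin]))
  obtain rfl : P = rangeProj x := eq_rangeProj hpos.isUnit hP1 hP2 hPran
  refine ⟨fun w => ?_, fun W => ⟨?_, fun ⟨hW, hW0⟩ => ?_⟩⟩
  · refine Iff.trans ?_ (isHermitian_conjTranspose_mul_iff hpos.isUnit w)
    rw [isHermitian_iff_forall_re_trace_conjTranspose_mul_eq_zero]
    simp only [conjTranspose_mul, Matrix.mul_assoc]
    rfl
  · rintro ⟨H, X, -, -, -, rfl⟩
    exact ⟨isHermitian_mul_conjTranspose_add x _,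
      one_sub_rangeProj_mul_mul_one_sub_rangeProj_eq_zero hpos.isUnit _⟩
  · obtain ⟨w, hw, rfl⟩ := exists_isHermitian_conjTranspose_mul_and_eq hpos hW hW0
    obtain ⟨H, X, hH, hPH, hPX, rfl⟩ := (isHermitian_conjTranspose_mul_iff hpos.isUnit w).mp hw
    exact ⟨H, X, hH, hPH, hPX, rfl⟩
end
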